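/- For x, y > 0 and every k ≥ 0, Δ_k applied (in the variable x) to the function x ↦ 𝟙_{[y,∞)}(x) equals Δ_k* applied (in the variable y) to y ↦ 𝟙_{[0,x]}(y); that is, Δ_k 𝟙_{[y,∞)}(x) = Δ_k* 𝟙_{[0,x]}(y). -/

import Mathlib

/-- `Δ_0 F(r) = F(r) - F(r/2)`, `Δ_{k+1} F(r) = Δ_k F(r) - 2^{k+1} Δ_k F(r/2)`. -/
noncomputable def Deltak : ℕ → (ℝ → ℝ) → ℝ → ℝ
  | 0, F => fun r => F r - F (r / 2)
  | (k + 1), F => fun r => Deltak k F r - 2 ^ (k + 1) * Deltak k F (r / 2)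

/-- `Δ_0* F(r) = F(r) - F(2r)`, `Δ_{k+1}* F(r) = Δ_k* F(r) - 2^{k+1} Δ_k* F(2r)`. -/
noncomputable def DeltakStar : ℕ → (ℝ → ℝ) → ℝ → ℝ
  | 0, F => fun r => F r - F (2 * r)
  | (k + 1), F => fun r => DeltakStar k F r - 2 ^ (k + 1) * DeltakStar k F (2 * r)

lemma deltakStar_dilate (k : ℕ) (H : ℝ → ℝ) :
    ∀ y : ℝ, DeltakStar k (fun t => H (2 * t)) y = DeltakStar k H (2 * y) := by
  induction k with
  | zero => intro y; rfl
  | succ k ih => intro y; simp only [DeltakStar, ih]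

/-- For `x, y > 0` and every `k ≥ 0`,
`Δ_k 𝟙_{[y,∞)}(x) = Δ_k* 𝟙_{[0,x]}(y)`. -/
theorem deltak_indicator_move (k : ℕ) (x y : ℝ) (hx : 0 < x) (hy : 0 < y) :
    Deltak k (fun t => Set.indicator (Set.Ici y) (fun _ => (1 : ℝ)) t) x
      = DeltakStar k (fun t => Set.indicator (Set.Icc (0 : ℝ) x) (fun _ => (1 : ℝ)) t) y := by
  induction k generalizing x with
  | zero =>
    have h2y : (0:ℝ) ≤ 2 * y := by positivity
    simp only [Deltak, DeltakStar, Set.indicator_apply, Set.mem_Ici, Set.mem_Icc,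
      hy.le, h2y, true_and]
    split_ifs <;> (try push_neg at *) <;> norm_num <;> linarith
  | succ k ih =>
    have hkey : (fun t => Set.indicator (Set.Icc (0:ℝ) (x/2)) (fun _ => (1:ℝ)) t)
        = fun t => Set.indicator (Set.Icc (0:ℝ) x) (fun _ => (1:ℝ)) (2 * t) := by
      funext t
      simp only [Set.indicator_apply, Set.mem_Icc]
      congr 1
      simp only [eq_iff_iff]
      constructor <;> rintro ⟨h1, h2⟩ <;> constructor <;> linarith
    simp only [Deltak, DeltakStar]
    rw [ih x hx, ih (x/2) (by positivity), hkey, deltakStar_dilate]
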